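/- Fix an integer n ≥ 2. Let T_1, …, T_n be independent random variables with T_i exponentially distributed with rate i, and let K be a random variable with values in {1, …, n−1}, independent of (T_1, …, T_n), with P(K = k) = 2(n+1)/((n−1)(k+2)(k+1)). Set τ^{(n)} = T_{K+1} + … + T_n. Then E[exp(−τ^{(n)})] = (2/(n−1))·(h_n − 1) − 1/(n+1), where h_n = ∑_{i=1}^n 1/i. -/

import Mathlib

/-!
Given `K = k`, `τ⁽ⁿ⁾` is a sum of independent exponentials of rates `k + 1, …, n`, so by the
independence of `K` and the `T i`, `E[e^{-τ⁽ⁿ⁾}] = ∑ₖ P(K = k) ∏_{i=k+1}^n i/(i+1)`. The product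
telescopes to `(k+1)/(n+1)`, which cancels the factor `k + 1` in the law of `K` and leaves
`2/(n-1) ∑_{k=1}^{n-1} 1/(k+2)`, a tail of the harmonic series.
-/

open MeasureTheory ProbabilityTheory

lemma exponentialPDF_mul_exp_mul {r t : ℝ} (hr : 0 < r) (ht : t < r) (x : ℝ) :
    exponentialPDF r x * ENNReal.ofReal (Real.exp (t * x))
      = ENNReal.ofReal (r / (r - t)) * exponentialPDF (r - t) x := by
  have hrt : 0 < r - t := sub_pos.mpr ht
  rw [exponentialPDF_eq, exponentialPDF_eq]
  split_ifs with hx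
  · rw [← ENNReal.ofReal_mul (by positivity), ← ENNReal.ofReal_mul (by positivity), ← mul_assoc,
      div_mul_cancel₀ _ hrt.ne', mul_assoc, ← Real.exp_add]
    ring_nf
  · simp

lemma measurable_exponentialPDF (r : ℝ) : Measurable (exponentialPDF r) :=
  (measurable_exponentialPDFReal r).ennreal_ofReal

lemma mgf_id_expMeasure {r t : ℝ} (hr : 0 < r) (ht : t < r) :
    mgf id (expMeasure r) t = r / (r - t) := by
  have hexp : Measurable fun x : ℝ => Real.exp (t * x) := by fun_prop
  have hlin : ∫⁻ x, ENNReal.ofReal (Real.exp (t * x)) ∂expMeasure r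
      = ENNReal.ofReal (r / (r - t)) := by
    rw [show expMeasure r = volume.withDensity (exponentialPDF r) from rfl,
      lintegral_withDensity_eq_lintegral_mul _ (measurable_exponentialPDF r) hexp.ennreal_ofReal]
    simp only [Pi.mul_apply]
    rw [lintegral_congr (exponentialPDF_mul_exp_mul hr ht),
      lintegral_const_mul _ (measurable_exponentialPDF (r - t)),
      lintegral_exponentialPDF_eq_one (sub_pos.mpr ht), mul_one]
  simp only [mgf, id]
  rw [integral_eq_lintegral_of_nonneg_ae (ae_of_all _ fun x => (Real.exp_pos _).le)
    hexp.aestronglyMeasurable, hlin, ENNReal.toReal_ofReal (div_nonneg hr.le (sub_pos.mpr ht).le)]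

lemma Fin.sum_filter_le_succ_eq_sum_Icc {M : Type*} [AddCommMonoid M] (f : ℕ → M) (k n : ℕ) :
    ∑ j ∈ Finset.univ.filter (fun j : Fin n => k ≤ j), f (j + 1)
      = ∑ i ∈ Finset.Icc (k + 1) n, f i := by
  refine Finset.sum_bij (fun j _ => (j : ℕ) + 1) ?_ ?_ ?_ fun _ _ => rfl
  · intro j hj
    rw [Finset.mem_filter] at hj
    rw [Finset.mem_Icc]
    omega
  · intro a _ b _ hab
    exact Fin.ext (by omega)
  · intro i hi
    rw [Finset.mem_Icc] at hi
    exact ⟨⟨i - 1, by omega⟩, Finset.mem_filter.mpr ⟨Finset.mem_univ _, by show k ≤ i - 1; omega⟩,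
      by show i - 1 + 1 = i; omega⟩

lemma prod_Icc_div_succ {k n : ℕ} (hkn : k ≤ n) :
    ∏ i ∈ Finset.Icc (k + 1) n, ((i : ℝ) / (i + 1)) = (k + 1) / (n + 1) := by
  induction n, hkn using Nat.le_induction with
  | base => simp [div_self (by positivity : (k : ℝ) + 1 ≠ 0)]
  | succ n hkn ih =>
    rw [Finset.prod_Icc_succ_top (by omega), ih]
    push_cast
    field_simp

lemma sum_Icc_one_div_add_two (m : ℕ) :
    ∑ k ∈ Finset.Icc 1 m, 1 / ((k : ℝ) + 2) = ∑ i ∈ Finset.Icc 1 (m + 2), 1 / (i : ℝ) - 3 / 2 := by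
  induction m with
  | zero => norm_num [Finset.sum_Icc_succ_top]
  | succ m ih =>
    rw [Finset.sum_Icc_succ_top (by omega), ih, Finset.sum_Icc_succ_top (by omega : 1 ≤ m + 1 + 2)]
    push_cast
    ring

theorem ProbabilityTheory.IndepFun.integral_comp_index_eq_sum {Ω β ι : Type*}
    [MeasurableSpace Ω] {μ : Measure Ω} [MeasurableSpace β]
    [MeasurableSpace ι] [MeasurableSingletonClass ι]
    {X : Ω → β} {K : Ω → ι} {s : Finset ι} {g : ι → β → ℝ}
    (hXK : IndepFun X K μ) (hK : Measurable K) (hKs : ∀ ω, K ω ∈ s)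
    (hg : ∀ k ∈ s, Measurable (g k)) (hint : ∀ k ∈ s, Integrable (fun ω => g k (X ω)) μ) :
    ∫ ω, g (K ω) (X ω) ∂μ = ∑ k ∈ s, μ.real {ω | K ω = k} * ∫ ω, g k (X ω) ∂μ := by
  set χ : ι → Ω → ℝ := fun k ω => ({k} : Set ι).indicator 1 (K ω)
  have hχ : ∀ k, Measurable (χ k) := fun k =>
    (measurable_one.indicator (measurableSet_singleton k)).comp hK
  have hsplit : ∀ ω, g (K ω) (X ω) = ∑ k ∈ s, χ k ω * g k (X ω) := by
    intro ω
    rw [Finset.sum_eq_single_of_mem (K ω) (hKs ω) fun k _ hk => ?_]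
    · simp [χ]
    · simp [χ, Ne.symm hk]
  have hterm : ∀ k ∈ s,
      ∫ ω, χ k ω * g k (X ω) ∂μ = μ.real {ω | K ω = k} * ∫ ω, g k (X ω) ∂μ := by
    intro k hk
    have hindep : IndepFun (χ k) (fun ω => g k (X ω)) μ :=
      (hXK.comp (hg k hk) (measurable_one.indicator (measurableSet_singleton k))).symm
    rw [hindep.integral_fun_mul_eq_mul_integral (hχ k).aestronglyMeasurable
      (hint k hk).aestronglyMeasurable]
    congr 1
    simp_rw [χ, ← Set.indicator_comp_right]
    exact integral_indicator_one (hK (measurableSet_singleton k))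
  have hint' : ∀ k ∈ s, Integrable (fun ω => χ k ω * g k (X ω)) μ := fun k hk =>
    (hint k hk).bdd_mul (hχ k).aestronglyMeasurable (c := 1) (ae_of_all _ fun ω => by
      simp only [χ, Set.indicator, Pi.one_apply]; split_ifs <;> simp)
  simp_rw [hsplit]
  rw [integral_finsetSum _ hint']
  exact Finset.sum_congr rfl hterm

lemma integral_exp_neg_sum_Icc {Ω : Type*} [MeasurableSpace Ω] {μ : Measure Ω}
    {T : ℕ → Ω → ℝ} {k n : ℕ} (hTmeas : ∀ i, Measurable (T i)) (hTindep : iIndepFun T μ)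
    (hTexp : ∀ i ∈ Finset.Icc (k + 1) n, μ.map (T i) = expMeasure i) (hkn : k ≤ n) :
    ∫ ω, Real.exp (-∑ i ∈ Finset.Icc (k + 1) n, T i ω) ∂μ = (k + 1) / (n + 1) := by
  have hmgf : ∀ i ∈ Finset.Icc (k + 1) n, mgf (T i) μ (-1) = i / (i + 1) := by
    intro i hi
    have hi_pos : (0 : ℝ) < i := by
      rw [Finset.mem_Icc] at hi
      exact_mod_cast (by omega : 0 < i)
    rw [← mgf_id_map (hTmeas i).aemeasurable, hTexp i hi,
      mgf_id_expMeasure hi_pos (by linarith), sub_neg_eq_add]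
  calc ∫ ω, Real.exp (-∑ i ∈ Finset.Icc (k + 1) n, T i ω) ∂μ
      = mgf (∑ i ∈ Finset.Icc (k + 1) n, T i) μ (-1) := by simp [mgf, Finset.sum_apply]
    _ = ∏ i ∈ Finset.Icc (k + 1) n, (i : ℝ) / (i + 1) := by
      rw [hTindep.mgf_sum hTmeas, Finset.prod_congr rfl hmgf]
    _ = (k + 1) / (n + 1) := prod_Icc_div_succ hkn

theorem statement7_general {Ω : Type*} [MeasureSpace Ω]
    (n : ℕ) (hn : 2 ≤ n) (T : ℕ → Ω → ℝ) (K : Ω → ℕ)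
    (hTmeas : ∀ i, Measurable (T i))
    (hTindep : iIndepFun T ℙ)
    (hTexp : ∀ i ∈ Finset.Icc 1 n, Measure.map (T i) ℙ = expMeasure i)
    (hKmeas : Measurable K)
    (hKrange : ∀ ω, K ω ∈ Finset.Icc 1 (n - 1))
    (hKindep : IndepFun (fun ω (i : Fin n) => T (i + 1) ω) K ℙ)
    (hKdist : ∀ k ∈ Finset.Icc 1 (n - 1),
      ℙ {ω | K ω = k} = ENNReal.ofReal
        (2 * ((n : ℝ) + 1) / (((n : ℝ) - 1) * ((k : ℝ) + 2) * ((k : ℝ) + 1)))) :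
    ∫ ω, Real.exp (-∑ i ∈ Finset.Icc (K ω + 1) n, T i ω) ∂ℙ
      = 2 / ((n : ℝ) - 1) * ((∑ i ∈ Finset.Icc 1 n, (1 : ℝ) / (i : ℝ)) - 1)
        - 1 / ((n : ℝ) + 1) := by
  have hn1 : (0 : ℝ) < n - 1 := by
    have : (2 : ℝ) ≤ n := by exact_mod_cast hn
    linarith
  set g : ℕ → (Fin n → ℝ) → ℝ := fun k v =>
    Real.exp (-∑ j ∈ Finset.univ.filter (fun j : Fin n => k ≤ j), v j)
  have hg : ∀ k ω, g k (fun i : Fin n => T (i + 1) ω)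
      = Real.exp (-∑ i ∈ Finset.Icc (k + 1) n, T i ω) := fun k ω => by
    simp only [g, Fin.sum_filter_le_succ_eq_sum_Icc (fun i => T i ω)]
  have hE : ∀ k ∈ Finset.Icc 1 (n - 1),
      ∫ ω, Real.exp (-∑ i ∈ Finset.Icc (k + 1) n, T i ω) = (k + 1) / (n + 1) := fun k hk =>
    integral_exp_neg_sum_Icc hTmeas hTindep
      (fun i hi => hTexp i (Finset.Icc_subset_Icc (by omega) le_rfl hi))
      (by rw [Finset.mem_Icc] at hk; omega)
  calc ∫ ω, Real.exp (-∑ i ∈ Finset.Icc (K ω + 1) n, T i ω)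
      = ∫ ω, g (K ω) (fun i : Fin n => T (i + 1) ω) := by simp only [hg]
    _ = ∑ k ∈ Finset.Icc 1 (n - 1), (ℙ : Measure Ω).real {ω | K ω = k}
          * ∫ ω, g k (fun i : Fin n => T (i + 1) ω) :=
      -- each `g k ∘ X` is integrable because its integral `(k + 1)/(n + 1)` is nonzero
      hKindep.integral_comp_index_eq_sum hKmeas hKrange (fun k _ => by fun_prop)
        fun k hk => .of_integral_ne_zero (by rw [funext (hg k), hE k hk]; positivity)
    _ = ∑ k ∈ Finset.Icc 1 (n - 1), 2 / ((n : ℝ) - 1) * (1 / ((k : ℝ) + 2)) := by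
      refine Finset.sum_congr rfl fun k hk => ?_
      have hmass_nonneg : 0 ≤ 2 * ((n : ℝ) + 1) / ((n - 1) * ((k : ℝ) + 2) * (k + 1)) :=
        div_nonneg (by positivity) (mul_nonneg (mul_nonneg hn1.le (by positivity)) (by positivity))
      rw [measureReal_def, hKdist k hk, ENNReal.toReal_ofReal hmass_nonneg, funext (hg k), hE k hk]
      field_simp
    _ = _ := by
      rw [← Finset.mul_sum, sum_Icc_one_div_add_two, show n - 1 + 2 = n + 1 by omega,
        Finset.sum_Icc_succ_top (by omega)]
      have := hn1.ne'
      push_cast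
      field_simp
      ring

/-- At `y = 1`, the Laplace transform of `τ⁽ⁿ⁾ = T_{K+1} + … + T_n` equals
`E[e^{−τ⁽ⁿ⁾}] = (2/(n−1))(h_n − 1) − 1/(n+1)`, where `h_n = ∑_{i=1}^n 1/i`. -/
theorem statement7 {Ω : Type*} [MeasureSpace Ω] [IsProbabilityMeasure (ℙ : Measure Ω)]
    (n : ℕ) (hn : 2 ≤ n) (T : ℕ → Ω → ℝ) (K : Ω → ℕ)
    (hTmeas : ∀ i, Measurable (T i))
    (hTindep : iIndepFun T ℙ)
    (hTexp : ∀ i ∈ Finset.Icc 1 n, Measure.map (T i) ℙ = expMeasure i)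
    (hKmeas : Measurable K)
    (hKrange : ∀ ω, K ω ∈ Finset.Icc 1 (n - 1))
    (hKindep : IndepFun (fun ω (i : Fin n) => T (i + 1) ω) K ℙ)
    (hKdist : ∀ k ∈ Finset.Icc 1 (n - 1),
      ℙ {ω | K ω = k} = ENNReal.ofReal
        (2 * ((n : ℝ) + 1) / (((n : ℝ) - 1) * ((k : ℝ) + 2) * ((k : ℝ) + 1)))) :
    ∫ ω, Real.exp (-∑ i ∈ Finset.Icc (K ω + 1) n, T i ω) ∂ℙ
      = 2 / ((n : ℝ) - 1) * ((∑ i ∈ Finset.Icc 1 n, (1 : ℝ) / (i : ℝ)) - 1)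
        - 1 / ((n : ℝ) + 1) :=
  statement7_general n hn T K hTmeas hTindep hTexp hKmeas hKrange hKindep hKdist
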